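/- Let ‖·‖ be a URTC-norm on ℝ² with unit sphere S. Then for every z ∈ S there exists a unique point w ∈ S such that ‖z − w‖ = 1 and the triple (0, z, w) is positively oriented, i.e., det(z, w) = z₁w₂ − z₂w₁ > 0. -/

import Mathlib

/-! The two URTC points of the pair `(z, 0)` are the unit vectors `x` with `N (z - x) = 1`.
The reflection `x ↦ z - x` swaps them (it has no fixed point, since `N z ≠ 2`) and negates
`det (z, ·)`, which vanishes at neither of them; so exactly one of them is positively oriented. -/

/-- `N` is a norm on `ℝ²`. -/
structure IsNorm (N : ℝ × ℝ → ℝ) : Prop where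
  add_le : ∀ x y : ℝ × ℝ, N (x + y) ≤ N x + N y
  smul_eq : ∀ (c : ℝ) (x : ℝ × ℝ), N (c • x) = |c| * N x
  eq_zero_of : ∀ x : ℝ × ℝ, N x = 0 → x = 0

/-- `N` is a URTC-norm: for every `a b` at `N`-distance `1`, there are exactly two
points `x` with `N (a - x) = 1` and `N (b - x) = 1`. -/
def IsURTC (N : ℝ × ℝ → ℝ) : Prop :=
  ∀ a b : ℝ × ℝ, N (a - b) = 1 →
    {x : ℝ × ℝ | N (a - x) = 1 ∧ N (b - x) = 1}.encard = 2

theorem existsUnique_pos_of_encard_eq_two {α : Type*} {S : Set α} (hS : S.encard = 2)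
    (σ : α → α) (hσS : ∀ x ∈ S, σ x ∈ S) (hσ : ∀ x ∈ S, σ x ≠ x)
    (f : α → ℝ) (hfσ : ∀ x ∈ S, f (σ x) = -f x) (hf : ∀ x ∈ S, f x ≠ 0) :
    ∃! x, x ∈ S ∧ 0 < f x := by
  obtain ⟨a, b, -, rfl⟩ := Set.encard_eq_two.mp hS
  have hσa : σ a = b := by
    rcases hσS a (by simp) with h | h
    · exact absurd h (hσ a (by simp))
    · exact h
  have hfb : f b = -f a := hσa ▸ hfσ a (by simp)
  rcases (hf a (by simp)).lt_or_gt with ha | ha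
  · refine ⟨b, ⟨by simp, by linarith⟩, ?_⟩
    rintro y ⟨rfl | rfl, hy⟩
    · linarith
    · rfl
  · refine ⟨a, ⟨by simp, ha⟩, ?_⟩
    rintro y ⟨rfl | rfl, hy⟩
    · rfl
    · linarith

theorem Prod.exists_eq_smul_of_det_eq_zero {z x : ℝ × ℝ} (hz : z ≠ 0)
    (hdet : z.1 * x.2 - z.2 * x.1 = 0) : ∃ t : ℝ, x = t • z := by
  have hsq : z.1 ^ 2 + z.2 ^ 2 ≠ 0 := by
    intro h
    apply hz
    ext <;> simp <;> nlinarith [sq_nonneg z.1, sq_nonneg z.2]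
  refine ⟨(z.1 * x.1 + z.2 * x.2) / (z.1 ^ 2 + z.2 ^ 2), Prod.ext ?_ ?_⟩ <;>
    simp only [Prod.smul_fst, Prod.smul_snd, smul_eq_mul] <;>
    rw [div_mul_eq_mul_div, eq_div_iff hsq]
  · linear_combination -z.2 * hdet
  · linear_combination z.1 * hdet

namespace IsNorm

variable {N : ℝ × ℝ → ℝ} (hN : IsNorm N)
include hN

theorem map_zero : N 0 = 0 := by
  simpa using hN.smul_eq 0 0

theorem map_neg (x : ℝ × ℝ) : N (-x) = N x := by
  simpa using hN.smul_eq (-1) x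

theorem ne_zero_of_eq_one {z : ℝ × ℝ} (hz : N z = 1) : z ≠ 0 := by
  rintro rfl
  simp [hN.map_zero] at hz

theorem sub_ne_self_of_eq_one {z x : ℝ × ℝ} (hz : N z = 1) (hx : N x = 1) : z - x ≠ x := by
  intro h
  have hzx : z = (2 : ℝ) • x := by rw [sub_eq_iff_eq_add.mp h]; module
  rw [hzx, hN.smul_eq, hx] at hz
  norm_num at hz

/-- Collinearity would force `x = ± z`, and then `N (z - x)` is `0` or `2`. -/
theorem det_ne_zero_of_unit_triangle {z x : ℝ × ℝ} (hz : N z = 1) (hx : N x = 1)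
    (hzx : N (z - x) = 1) : z.1 * x.2 - z.2 * x.1 ≠ 0 := by
  intro hdet
  obtain ⟨t, rfl⟩ := Prod.exists_eq_smul_of_det_eq_zero (hN.ne_zero_of_eq_one hz) hdet
  rw [hN.smul_eq, hz, mul_one] at hx
  rcases abs_eq zero_le_one |>.mp hx with rfl | rfl
  · simp [hN.map_zero] at hzx
  · have h2z : z - (-1 : ℝ) • z = (2 : ℝ) • z := by module
    rw [h2z, hN.smul_eq, hz] at hzx
    norm_num at hzx

end IsNorm

theorem IsURTC.encard_unit_neighbours {N : ℝ × ℝ → ℝ} (hU : IsURTC N) (hN : IsNorm N)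
    {z : ℝ × ℝ} (hz : N z = 1) : {x | N x = 1 ∧ N (z - x) = 1}.encard = 2 := by
  convert hU z 0 (by simpa using hz) using 2
  ext x
  rw [Set.mem_ofPred, Set.mem_ofPred, zero_sub, hN.map_neg, and_comm]

/-- For a URTC-norm, every point `z` of the unit sphere has a unique "counterclockwise
neighbour": a unique `w` on the sphere with `N (z - w) = 1` and `det (z, w) > 0`. -/
theorem existsUnique_ccw_neighbour (N : ℝ × ℝ → ℝ) (hN : IsNorm N) (hU : IsURTC N) :
    ∀ z : ℝ × ℝ, N z = 1 →
      ∃! w : ℝ × ℝ, N w = 1 ∧ N (z - w) = 1 ∧ 0 < z.1 * w.2 - z.2 * w.1 := by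
  intro z hz
  have h := existsUnique_pos_of_encard_eq_two (hU.encard_unit_neighbours hN hz)
    (z - ·) (fun x hx => ⟨by simpa using hx.2, by simpa using hx.1⟩)
    (fun x hx => hN.sub_ne_self_of_eq_one hz hx.1)
    (fun x => z.1 * x.2 - z.2 * x.1) (fun x _ => by simp only [Prod.fst_sub, Prod.snd_sub]; ring)
    (fun x hx => hN.det_ne_zero_of_unit_triangle hz hx.1 hx.2)
  simpa only [Set.mem_ofPred_eq, and_assoc] using h
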